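/- Fix a prime p and integers m, n ≥ 1. Let κ = 𝔽_{p^m} and let k be an algebraically closed field of characteristic p. Let f¹, f² : I → {0,1} be functions with f¹ ≠ f² which are comparable, i.e. f¹(τ) ≤ f²(τ) for all τ ∈ I, or f²(τ) ≤ f¹(τ) for all τ ∈ I. Then the only W_n(k)-linear map M(f¹)_n → M(f²)_n commuting with F, V and the W_n(κ)-actions is the zero map. -/

import Mathlib

/-- The ring homomorphism on truncated Witt vectors induced functorially by a
ring homomorphism `f : R →+* S` (acting coordinatewise). -/
noncomputable def TruncatedWittVector.mapRingHom {p : ℕ} [Fact p.Prime] (n : ℕ)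
    {R S : Type*} [CommRing R] [CommRing S] (f : R →+* S) :
    TruncatedWittVector p n R →+* TruncatedWittVector p n S :=
  RingHom.liftOfRightInverse (WittVector.truncate n) TruncatedWittVector.out
    TruncatedWittVector.truncateFun_out
    ⟨(WittVector.truncate n).comp (WittVector.map f), by
      intro x hx
      rw [WittVector.mem_ker_truncate] at hx
      rw [RingHom.mem_ker, RingHom.comp_apply, ← RingHom.mem_ker,
        WittVector.mem_ker_truncate]
      intro i hi
      rw [WittVector.map_coeff, hx i hi, map_zero]⟩

section Dieudonne

variable (p n : ℕ) [Fact p.Prime] (κ k : Type*) [CommRing κ] [Field k]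
  [CharP k p] [PerfectField k]

/-- The `W_n(κ)`-action on the Dieudonné module `M(f)_n`, i.e. the free
`W_n(k)`-module on the set `I` of ring homomorphisms `κ → k`, determined by
`c • e_τ = W_n(τ)(c) • e_τ`. -/
noncomputable def wittAct (c : TruncatedWittVector p n κ)
    (v : (κ →+* k) → TruncatedWittVector p n k) :
    (κ →+* k) → TruncatedWittVector p n k :=
  fun τ => TruncatedWittVector.mapRingHom n τ c * v τ

/-- The Frobenius `F` of the Dieudonné module `M(f)_n`: the additive,
`σ`-semilinear map determined by `F e_τ = p ^ (f τ) • e_{τ+1}`, where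
`τ + 1 = frobenius ∘ τ` is the successor of `τ`. -/
noncomputable def wittF (f : (κ →+* k) → ℕ)
    (v : (κ →+* k) → TruncatedWittVector p n k) :
    (κ →+* k) → TruncatedWittVector p n k :=
  fun τ =>
    (p : TruncatedWittVector p n k) ^ f ((frobeniusEquiv k p).symm.toRingHom.comp τ) *
      TruncatedWittVector.mapRingHom n (frobenius k p)
        (v ((frobeniusEquiv k p).symm.toRingHom.comp τ))

/-- The Verschiebung `V` of the Dieudonné module `M(f)_n`: the additive,
`σ⁻¹`-semilinear map determined by `V e_{τ+1} = p ^ (1 - f τ) • e_τ`. -/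
noncomputable def wittV (f : (κ →+* k) → ℕ)
    (v : (κ →+* k) → TruncatedWittVector p n k) :
    (κ →+* k) → TruncatedWittVector p n k :=
  fun τ =>
    (p : TruncatedWittVector p n k) ^ (1 - f τ) *
      TruncatedWittVector.mapRingHom n (frobeniusEquiv k p).symm.toRingHom
        (v ((frobenius k p).comp τ))

end Dieudonne

/-!
The Teichmüller lift of `x ∈ κ` acts on `e_τ` by `[τ x]`, and `[τ x] - [τ' x]` is a unit when
`τ x ≠ τ' x`; so a morphism `φ` commuting with the `W_n(κ)`-action is diagonal, `φ v = v * a`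
with `a = φ 1`. Evaluating the compatibilities with `F` and `V` on `1` gives
`p ^ f¹(τ) a(τ+1) = p ^ f²(τ) σ(a τ)` and `p ^ (1 - f¹(τ)) σ(a τ) = p ^ (1 - f²(τ)) a(τ+1)`,
which for `f¹ ≤ f²` combine to `a(τ+1) = p ^ (f²(τ) - f¹(τ)) σ(a τ)` (for `f² ≤ f¹` the same
holds along `τ ↦ τ - 1`, with `σ⁻¹`). The embeddings `κ → k` form a single Frobenius orbit, so
going around it from a `τ₀` with `f¹(τ₀) ≠ f²(τ₀)` gives `a τ₀ = p ^ c ψ(a τ₀)` with `c ≥ 1` and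
`ψ` a ring endomorphism fixing `p`. Iterating, `a τ₀ ∈ p ^ n W_n(k) = 0`, and the recursion
spreads `a = 0` over the whole orbit.
-/

namespace TruncatedWittVector

variable {p : ℕ} [Fact p.Prime] {n : ℕ}

section Map

variable {R S : Type*} [CommRing R] [CommRing S]

theorem mapRingHom_truncate (f : R →+* S) (x : WittVector p R) :
    mapRingHom n f (WittVector.truncate n x) = WittVector.truncate n (WittVector.map f x) :=
  RingHom.liftOfRightInverse_comp_apply _ _ _ _ x

theorem coeff_mapRingHom (f : R →+* S) (x : TruncatedWittVector p n R) (i : Fin n) :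
    (mapRingHom n f x).coeff i = f (x.coeff i) := by
  obtain ⟨y, rfl⟩ := WittVector.truncate_surjective (p := p) n R x
  rw [mapRingHom_truncate, WittVector.coeff_truncate, WittVector.coeff_truncate,
    WittVector.map_coeff]

theorem mapRingHom_leftInverse {f : R →+* S} {g : S →+* R} (h : Function.LeftInverse g f) :
    Function.LeftInverse (mapRingHom (p := p) n g) (mapRingHom n f) := fun x =>
  ext fun i => by rw [coeff_mapRingHom, coeff_mapRingHom, h]

end Map

section Perfect

variable {K : Type*} [CommRing K] [ExpChar K p] [PerfectRing K p]

theorem mapRingHom_frobenius_frobeniusEquiv_symm (x : TruncatedWittVector p n K) :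
    mapRingHom n (frobenius K p) (mapRingHom n (frobeniusEquiv K p).symm.toRingHom x) = x :=
  mapRingHom_leftInverse (f := (frobeniusEquiv K p).symm.toRingHom)
    (frobenius_apply_frobeniusEquiv_symm K p) x

theorem mapRingHom_frobeniusEquiv_symm_frobenius (x : TruncatedWittVector p n K) :
    mapRingHom n (frobeniusEquiv K p).symm.toRingHom (mapRingHom n (frobenius K p) x) = x :=
  mapRingHom_leftInverse (g := (frobeniusEquiv K p).symm.toRingHom)
    (frobeniusEquiv_symm_apply_frobenius K p) x

end Perfect

theorem natCast_pow_eq_zero {R : Type*} [CommRing R] [CharP R p] :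
    (p : TruncatedWittVector p n R) ^ n = 0 := by
  rw [← map_natCast (WittVector.truncate n), ← map_pow]
  ext i
  rw [WittVector.coeff_truncate, WittVector.coeff_p_pow_eq_zero _ _ i.is_lt.ne, coeff_zero]

theorem isUnit_truncate_teichmuller_sub {K : Type*} [Field K] [CharP K p] {a b : K}
    (h : a ≠ b) :
    IsUnit (WittVector.truncate n (WittVector.teichmuller p a - WittVector.teichmuller p b)) := by
  refine (WittVector.isUnit_of_coeff_zero_ne_zero _ ?_).map _
  rwa [← WittVector.constantCoeff_apply, map_sub, WittVector.constantCoeff_apply,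
    WittVector.constantCoeff_apply, WittVector.teichmuller_coeff_zero,
    WittVector.teichmuller_coeff_zero, sub_ne_zero]

end TruncatedWittVector

def RingHom.toZModAlgHom {n : ℕ} {A B : Type*} [Ring A] [Ring B] [Algebra (ZMod n) A]
    [Algebra (ZMod n) B] (f : A →+* B) : A →ₐ[ZMod n] B :=
  { f with
    commutes' := fun r =>
      RingHom.congr_fun (RingHom.ext_zmod (f.comp (algebraMap _ _)) (algebraMap _ _)) r }

theorem RingHom.iterate_comp_apply {R S : Type*} [NonAssocSemiring R] [NonAssocSemiring S]
    (f : S →+* S) (g : R →+* S) (j : ℕ) (x : R) :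
    (f.comp^[j] g) x = f^[j] (g x) := by
  induction j generalizing g with
  | zero => rfl
  | succ j ih => rw [Function.iterate_succ_apply, ih, Function.iterate_succ_apply]; rfl

namespace FiniteField

variable {κ k : Type*} [Field κ] [Finite κ] [Field k]

theorem finite_ringHom (p : ℕ) [Fact p.Prime] [CharP κ p] [CharP k p] : Finite (κ →+* k) := by
  let := ZMod.algebra κ p
  let := ZMod.algebra k p
  exact Finite.of_injective (RingHom.toZModAlgHom (n := p))
    fun f g h => RingHom.ext (AlgHom.ext_iff.1 h)

theorem exists_iterate_frobenius_comp_eq (p : ℕ) [Fact p.Prime] [CharP κ p] [CharP k p]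
    (τ τ' : κ →+* k) : ∃ j, (frobenius k p).comp^[j] τ = τ' := by
  let := ZMod.algebra κ p
  let := ZMod.algebra k p
  let : Algebra κ k := τ.toAlgebra
  -- `κ / 𝔽_p` is normal, so `τ' = τ ∘ g` for some `g` in its Galois group, a power of Frobenius.
  obtain ⟨j, hj⟩ := (bijective_frobeniusAlgEquivOfAlgebraic_pow (ZMod p) κ).2
    (Normal.algHomEquivAut (ZMod p) k κ (τ'.toZModAlgHom (n := p)))
  have h := (Normal.algHomEquivAut (ZMod p) k κ).symm_apply_apply (τ'.toZModAlgHom (n := p))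
  rw [← hj] at h
  refine ⟨j, RingHom.ext fun x => ?_⟩
  have hx := congr($h x)
  change τ ((frobeniusAlgEquivOfAlgebraic (ZMod p) κ ^ (j : ℕ)) x) = τ' x at hx
  rw [AlgEquiv.coe_pow, coe_frobeniusAlgEquivOfAlgebraic_iterate, ZMod.card] at hx
  rw [RingHom.iterate_comp_apply, iterate_frobenius, ← map_pow]
  exact hx

end FiniteField

section TwistedRecursion

variable {W I : Type*} [CommRing W] {ρ : W →+* W} {P : W} {s : I → I} {δ : I → ℕ} {b : I → W}

theorem iterate_eq_pow_sum_mul (hP : ρ P = P) (h : ∀ τ, b (s τ) = P ^ δ τ * ρ (b τ))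
    (N : ℕ) (τ : I) :
    b (s^[N] τ) = P ^ (∑ i ∈ Finset.range N, δ (s^[i] τ)) * (ρ ^ N) (b τ) := by
  induction N with
  | zero => simp
  | succ N ih =>
    rw [Function.iterate_succ_apply', h, ih, map_mul, map_pow, hP, Finset.sum_range_succ,
      pow_add, pow_succ', RingHom.mul_def, RingHom.comp_apply]
    ring

theorem eq_zero_of_eq_pow_mul_self {n c : ℕ} (hP : ρ P = P) (hPn : P ^ n = 0) (hc : 1 ≤ c)
    {x : W} (hx : x = P ^ c * ρ x) : x = 0 := by
  have key : ∀ r, x = P ^ (c * r) * (ρ ^ r) x := by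
    intro r
    induction r with
    | zero => simp
    | succ r ih =>
      have hPr : (ρ ^ r) P = P := by rw [RingHom.coe_pow, Function.iterate_fixed hP]
      calc x = P ^ (c * r) * (ρ ^ r) (P ^ c * ρ x) := by rwa [← hx]
        _ = P ^ (c * (r + 1)) * (ρ ^ (r + 1)) x := by
          rw [map_mul, map_pow, hPr, pow_succ ρ, RingHom.mul_def, RingHom.comp_apply]
          ring
  rw [key n, pow_eq_zero_of_le (Nat.le_mul_of_pos_left n hc) hPn, zero_mul]

theorem eq_zero_of_forall_eq_pow_mul {n : ℕ} (hP : ρ P = P) (hPn : P ^ n = 0)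
    (htrans : ∀ τ τ', ∃ j, s^[j] τ = τ') {τ₀ : I} (hτ₀ : 1 ≤ δ τ₀)
    (h : ∀ τ, b (s τ) = P ^ δ τ * ρ (b τ)) : b = 0 := by
  obtain ⟨j, hj⟩ := htrans (s τ₀) τ₀
  have hb₀ : b τ₀ = 0 := by
    have hcycle := iterate_eq_pow_sum_mul hP h (j + 1) τ₀
    rw [Function.iterate_succ_apply, hj, Finset.sum_range_succ', Function.iterate_zero_apply]
      at hcycle
    exact eq_zero_of_eq_pow_mul_self (by rw [RingHom.coe_pow, Function.iterate_fixed hP]) hPn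
      (hτ₀.trans (Nat.le_add_left _ _)) hcycle
  funext τ
  obtain ⟨i, rfl⟩ := htrans τ₀ τ
  rw [iterate_eq_pow_sum_mul hP h, hb₀, map_zero, mul_zero, Pi.zero_apply]

end TwistedRecursion

theorem eq_pow_sub_mul_of_le {M : Type*} [Monoid M] {P x y : M} {e₁ e₂ : ℕ} (he₂ : e₂ ≤ 1)
    (hle : e₁ ≤ e₂) (hF : P ^ e₁ * x = P ^ e₂ * y) (hV : P ^ (1 - e₁) * y = P ^ (1 - e₂) * x) :
    x = P ^ (e₂ - e₁) * y := by
  interval_cases e₂ <;> interval_cases e₁ <;> simp_all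

theorem eq_pow_sub_mul_of_ge {M : Type*} [Monoid M] {P x y : M} {e₁ e₂ : ℕ} (he₁ : e₁ ≤ 1)
    (hle : e₂ ≤ e₁) (hF : P ^ e₁ * x = P ^ e₂ * y) (hV : P ^ (1 - e₁) * y = P ^ (1 - e₂) * x) :
    y = P ^ (e₁ - e₂) * x := by
  interval_cases e₁ <;> interval_cases e₂ <;> simp_all

section DieudonneMorphism

open TruncatedWittVector

variable {p n : ℕ} [Fact p.Prime] {κ k : Type*} [CommRing κ] [Field k] [CharP k p]
  {φ : ((κ →+* k) → TruncatedWittVector p n k) → ((κ →+* k) → TruncatedWittVector p n k)}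

theorem apply_single_eq_zero_of_commute_wittAct [DecidableEq (κ →+* k)]
    (hlin : IsLinearMap (TruncatedWittVector p n k) φ)
    (hact : ∀ c, φ ∘ wittAct p n κ k c = wittAct p n κ k c ∘ φ) {τ τ' : κ →+* k} (h : τ ≠ τ') :
    φ (Pi.single τ 1) τ' = 0 := by
  obtain ⟨x, hx⟩ := DFunLike.ne_iff.1 h
  set c : TruncatedWittVector p n κ := WittVector.truncate n (WittVector.teichmuller p x)
  have hsingle : wittAct p n κ k c (Pi.single τ 1) = mapRingHom n τ c • Pi.single τ 1 := by
    ext σ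
    by_cases hσ : σ = τ
    · subst hσ; simp [wittAct]
    · simp [wittAct, hσ]
  have key := congrFun (congrFun (hact c) (Pi.single τ 1)) τ'
  simp only [Function.comp_apply, hsingle, hlin.map_smul, Pi.smul_apply, smul_eq_mul,
    wittAct] at key
  have hunit : IsUnit (mapRingHom n τ c - mapRingHom n τ' c) := by
    simpa only [c, mapRingHom_truncate, WittVector.map_teichmuller, map_sub]
      using isUnit_truncate_teichmuller_sub hx
  exact hunit.mul_right_eq_zero.1 (by rw [sub_mul, key, sub_self])

theorem apply_eq_mul_apply_one_of_commute_wittAct [Finite (κ →+* k)]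
    (hlin : IsLinearMap (TruncatedWittVector p n k) φ)
    (hact : ∀ c, φ ∘ wittAct p n κ k c = wittAct p n κ k c ∘ φ)
    (v : (κ →+* k) → TruncatedWittVector p n k) :
    φ v = v * φ 1 := by
  have := Fintype.ofFinite (κ →+* k)
  classical
  have hdiag : ∀ (v : (κ →+* k) → TruncatedWittVector p n k) τ,
      φ v τ = v τ * φ (Pi.single τ 1) τ := by
    intro v τ
    have hsingle : ∀ σ, φ (Pi.single σ (v σ)) = v σ • φ (Pi.single σ 1) := fun σ => by
      rw [← hlin.map_smul, ← Pi.single_smul', smul_eq_mul, mul_one]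
    have hsum := map_sum (hlin.mk' φ) (fun σ => Pi.single σ (v σ)) Finset.univ
    simp only [IsLinearMap.mk'_apply] at hsum
    conv_lhs => rw [← Finset.univ_sum_single v]
    rw [hsum, Finset.sum_apply, Finset.sum_eq_single τ]
    · simp [hsingle]
    · intro σ _ hσ
      simp [hsingle, apply_single_eq_zero_of_commute_wittAct hlin hact hσ]
    · simp
  funext τ
  rw [hdiag v, Pi.mul_apply, hdiag 1, Pi.one_apply, one_mul]

variable [PerfectField k] {f₁ f₂ : (κ →+* k) → ℕ}

theorem frobeniusEquiv_symm_comp_frobenius_comp (τ : κ →+* k) :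
    (frobeniusEquiv k p).symm.toRingHom.comp ((frobenius k p).comp τ) = τ :=
  RingHom.ext fun x => frobeniusEquiv_symm_apply_frobenius k p (τ x)

theorem frobenius_comp_frobeniusEquiv_symm_comp (τ : κ →+* k) :
    (frobenius k p).comp ((frobeniusEquiv k p).symm.toRingHom.comp τ) = τ :=
  RingHom.ext fun x => frobenius_apply_frobeniusEquiv_symm k p (τ x)

theorem pow_mul_apply_one_comp_frobenius_eq (hmul : ∀ v, φ v = v * φ 1)
    (hF : φ ∘ wittF p n κ k f₁ = wittF p n κ k f₂ ∘ φ) (τ : κ →+* k) :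
    (p : TruncatedWittVector p n k) ^ f₁ τ * φ 1 ((frobenius k p).comp τ) =
      p ^ f₂ τ * mapRingHom n (frobenius k p) (φ 1 τ) := by
  have h := congrFun (congrFun hF 1) ((frobenius k p).comp τ)
  rw [Function.comp_apply, Function.comp_apply, hmul] at h
  simpa only [wittF, Pi.mul_apply, Pi.one_apply, map_one, mul_one,
    frobeniusEquiv_symm_comp_frobenius_comp, mul_comm] using h

theorem pow_mul_mapRingHom_frobenius_apply_one_eq (hmul : ∀ v, φ v = v * φ 1)
    (hV : φ ∘ wittV p n κ k f₁ = wittV p n κ k f₂ ∘ φ) (τ : κ →+* k) :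
    (p : TruncatedWittVector p n k) ^ (1 - f₁ τ) * mapRingHom n (frobenius k p) (φ 1 τ) =
      p ^ (1 - f₂ τ) * φ 1 ((frobenius k p).comp τ) := by
  have h := congrFun (congrFun hV 1) τ
  rw [Function.comp_apply, Function.comp_apply, hmul] at h
  simp only [wittV, Pi.mul_apply, Pi.one_apply, map_one, mul_one] at h
  simpa only [map_mul, map_pow, map_natCast, mapRingHom_frobenius_frobeniusEquiv_symm]
    using congrArg (mapRingHom n (frobenius k p)) h

end DieudonneMorphism

section Vanishing

open TruncatedWittVector

variable {p n : ℕ} [Fact p.Prime] {κ k : Type*} [Field κ] [Finite κ] [CharP κ p] [Field k]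
  [CharP k p] {f₁ f₂ : (κ →+* k) → ℕ} {a : (κ →+* k) → TruncatedWittVector p n k}

theorem eq_zero_of_frobenius_relations_of_le (hf₂ : ∀ τ, f₂ τ ≤ 1) (hle : ∀ τ, f₁ τ ≤ f₂ τ)
    (hne : f₁ ≠ f₂)
    (hF : ∀ τ, (p : TruncatedWittVector p n k) ^ f₁ τ * a ((frobenius k p).comp τ) =
      p ^ f₂ τ * mapRingHom n (frobenius k p) (a τ))
    (hV : ∀ τ, (p : TruncatedWittVector p n k) ^ (1 - f₁ τ) * mapRingHom n (frobenius k p) (a τ) =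
      p ^ (1 - f₂ τ) * a ((frobenius k p).comp τ)) :
    a = 0 := by
  obtain ⟨τ₀, hτ₀⟩ := Function.ne_iff.1 hne
  exact eq_zero_of_forall_eq_pow_mul (map_natCast _ p) natCast_pow_eq_zero
    (FiniteField.exists_iterate_frobenius_comp_eq p) (τ₀ := τ₀) (δ := fun τ => f₂ τ - f₁ τ)
    (by have := hle τ₀; omega) fun τ => eq_pow_sub_mul_of_le (hf₂ τ) (hle τ) (hF τ) (hV τ)

theorem eq_zero_of_frobenius_relations_of_ge [PerfectField k] (hf₁ : ∀ τ, f₁ τ ≤ 1)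
    (hle : ∀ τ, f₂ τ ≤ f₁ τ) (hne : f₁ ≠ f₂)
    (hF : ∀ τ, (p : TruncatedWittVector p n k) ^ f₁ τ * a ((frobenius k p).comp τ) =
      p ^ f₂ τ * mapRingHom n (frobenius k p) (a τ))
    (hV : ∀ τ, (p : TruncatedWittVector p n k) ^ (1 - f₁ τ) * mapRingHom n (frobenius k p) (a τ) =
      p ^ (1 - f₂ τ) * a ((frobenius k p).comp τ)) :
    a = 0 := by
  obtain ⟨τ₀, hτ₀⟩ := Function.ne_iff.1 hne
  -- Run the recursion backwards, along `τ ↦ σ⁻¹ ∘ τ` with `σ⁻¹` acting on `W_n(k)`.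
  set pred : (κ →+* k) → (κ →+* k) := (frobeniusEquiv k p).symm.toRingHom.comp
  refine eq_zero_of_forall_eq_pow_mul (ρ := mapRingHom n (frobeniusEquiv k p).symm.toRingHom)
    (s := pred) (δ := fun τ => f₁ (pred τ) - f₂ (pred τ)) (τ₀ := (frobenius k p).comp τ₀)
    (map_natCast _ p) natCast_pow_eq_zero ?_ ?_ ?_
  · intro τ τ'
    obtain ⟨j, hj⟩ := FiniteField.exists_iterate_frobenius_comp_eq p τ' τ
    exact ⟨j, hj ▸ Function.LeftInverse.iterate frobeniusEquiv_symm_comp_frobenius_comp j τ'⟩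
  · simp only [pred, frobeniusEquiv_symm_comp_frobenius_comp]
    have := hle τ₀
    omega
  · intro τ
    have h := eq_pow_sub_mul_of_ge (hf₁ _) (hle _) (hF (pred τ)) (hV (pred τ))
    rw [frobenius_comp_frobeniusEquiv_symm_comp] at h
    simpa only [mapRingHom_frobeniusEquiv_symm_frobenius, map_mul, map_pow, map_natCast]
      using congrArg (mapRingHom n (frobeniusEquiv k p).symm.toRingHom) h

end Vanishing

theorem stmt6_general (p n : ℕ) [Fact p.Prime]
    (κ k : Type*) [Field κ] [Fintype κ] [CharP κ p]
    [Field k] [IsAlgClosed k] [CharP k p]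
    (f₁ f₂ : (κ →+* k) → ℕ) (hf₁ : ∀ τ, f₁ τ ≤ 1) (hf₂ : ∀ τ, f₂ τ ≤ 1)
    (hne : f₁ ≠ f₂)
    (hcomp : (∀ τ, f₁ τ ≤ f₂ τ) ∨ (∀ τ, f₂ τ ≤ f₁ τ))
    (φ : ((κ →+* k) → TruncatedWittVector p n k) →
      ((κ →+* k) → TruncatedWittVector p n k))
    (hlin : IsLinearMap (TruncatedWittVector p n k) φ)
    (hF : φ ∘ wittF p n κ k f₁ = wittF p n κ k f₂ ∘ φ)
    (hV : φ ∘ wittV p n κ k f₁ = wittV p n κ k f₂ ∘ φ)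
    (hact : ∀ c, φ ∘ wittAct p n κ k c = wittAct p n κ k c ∘ φ) :
    φ = 0 := by
  have := FiniteField.finite_ringHom (κ := κ) (k := k) p
  have hmul := apply_eq_mul_apply_one_of_commute_wittAct hlin hact
  have hF' := pow_mul_apply_one_comp_frobenius_eq hmul hF
  have hV' := pow_mul_mapRingHom_frobenius_apply_one_eq hmul hV
  have ha : φ 1 = 0 := by
    rcases hcomp with hle | hle
    · exact eq_zero_of_frobenius_relations_of_le hf₂ hle hne hF' hV'
    · exact eq_zero_of_frobenius_relations_of_ge hf₁ hle hne hF' hV'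
  funext v
  rw [hmul v, ha, mul_zero, Pi.zero_apply]

/-- The vanishing part of Lemma 3.2 of the paper, at the level of Dieudonné
modules (k-points): for `κ = 𝔽_{p^m}` and `k` algebraically closed of
characteristic `p`, if `f¹ ≠ f²` are comparable `{0,1}`-valued functions on
the set `I` of embeddings `κ → k`, then the only `W_n(k)`-linear map
`M(f¹)_n → M(f²)_n` commuting with `F`, `V` and the `W_n(κ)`-actions is the
zero map. -/
theorem stmt6 (p m n : ℕ) [Fact p.Prime] (hm : 1 ≤ m) (hn : 1 ≤ n)
    (κ k : Type*) [Field κ] [Fintype κ] [CharP κ p]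
    (hcard : Fintype.card κ = p ^ m)
    [Field k] [IsAlgClosed k] [CharP k p]
    (f₁ f₂ : (κ →+* k) → ℕ) (hf₁ : ∀ τ, f₁ τ ≤ 1) (hf₂ : ∀ τ, f₂ τ ≤ 1)
    (hne : f₁ ≠ f₂)
    (hcomp : (∀ τ, f₁ τ ≤ f₂ τ) ∨ (∀ τ, f₂ τ ≤ f₁ τ))
    (φ : ((κ →+* k) → TruncatedWittVector p n k) →
      ((κ →+* k) → TruncatedWittVector p n k))
    (hlin : IsLinearMap (TruncatedWittVector p n k) φ)
    (hF : φ ∘ wittF p n κ k f₁ = wittF p n κ k f₂ ∘ φ)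
    (hV : φ ∘ wittV p n κ k f₁ = wittV p n κ k f₂ ∘ φ)
    (hact : ∀ c, φ ∘ wittAct p n κ k c = wittAct p n κ k c ∘ φ) :
    φ = 0 :=
  stmt6_general p n κ k f₁ f₂ hf₁ hf₂ hne hcomp φ hlin hF hV hact
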